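/- arXiv:1106.0879 — 2 statements merged into one kernel-verified Lean document; each statement's English description precedes it below -/
import Mathlib

section
/- With the notation of the tree-of-metric-spaces construction (n_0 = 1, n_k ≥ 2, metrics d_k on {1,…,n_k} of diameter 1 and minimal distance δ_k, and the metric ρ_α on Y = ∏_{k≥1}{1,…,n_k}), assume δ_k > n_k^{−1/α} for all k and lim_{k→∞} log(1/δ_k) / ∑_{i=1}^{k−1} log n_i = 0. Then the Hausdorff dimension of (Y, ρ_α) equals α. -/
open scoped Classical

/-- The first coordinate at which two distinct sequences differ. -/
noncomputable def firstDiff {n : ℕ → ℕ} (x y : ∀ k : ℕ, Fin (n (k + 1))) (h : x ≠ y) : ℕ :=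
  Nat.find (Function.ne_iff.mp h)

/-- The tree metric `ρ_α` on `∏_{k≥1} {1,…,n_k}`. -/
noncomputable def rhoAlpha (n : ℕ → ℕ)
    (d : ∀ k : ℕ, Fin (n (k + 1)) → Fin (n (k + 1)) → ℝ) (α : ℝ)
    (x y : ∀ k : ℕ, Fin (n (k + 1))) : ℝ :=
  if h : x = y then 0
  else
    d (firstDiff x y h) (x (firstDiff x y h)) (y (firstDiff x y h)) /
      (∏ i ∈ Finset.range (firstDiff x y h + 1), (n i : ℝ)) ^ ((1 : ℝ) / α)

/-!
Write `W k = n₁ ⋯ nₖ` for the number of cylinders of depth `k` (points whose codes agree in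
the first `k` coordinates). Such a cylinder has diameter at most `W k ^ (-1/α)`, while two points
whose codes first differ at coordinate `k` are at distance at least `t k = δₖ₊₁ W k ^ (-1/α)`.

For `β > α`, covering `Y` by the cylinders of depth `k` gives `μH[β] Y ≤ W k ^ (1 - β/α) → 0`.
For `β < α` we use the mass distribution principle with the uniform product measure, which gives
each cylinder of depth `k` mass `1 / W k`: a set of diameter `D < t j` for all `j < k` lies in a
single cylinder of depth `k`, and the hypothesis on `log (1/δₖ)` makes `W k * t k ^ β → ∞`, so the
mass of any set is at most a constant times its diameter to the power `β`.
-/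

open Filter Set MeasureTheory Topology
open scoped ENNReal

theorem dimH_eq_ofReal_of_hausdorffMeasure {X : Type*} [EMetricSpace X] [MeasurableSpace X]
    [BorelSpace X] {s : Set X} {α : ℝ} (hα : 0 ≤ α)
    (h_zero : ∀ β : ℝ, α < β → μH[β] s = 0)
    (h_ne_zero : ∀ β : ℝ, 0 < β → β < α → μH[β] s ≠ 0) :
    dimH s = ENNReal.ofReal α := by
  refine le_antisymm (dimH_le fun β hβ => not_lt.1 fun hlt => ?_) ?_
  · simp [h_zero β ((ENNReal.ofReal_lt_coe_iff hα).1 hlt)] at hβ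
  refine ENNReal.le_of_forall_nnreal_lt fun β hβ => ?_
  rcases eq_zero_or_pos β with rfl | hβ0
  · simp
  · exact le_dimH_of_hausdorffMeasure_ne_zero (h_ne_zero β hβ0 (ENNReal.coe_lt_ofReal.1 hβ))

section SequenceSpace

variable {X : ℕ → Type*} {Y : Type*} [MetricSpace Y]

theorem image_subset_pi_range_of_dist_lt (e : Y ≃ ∀ k, X k) {t : ℕ → ℝ}
    (hsep : ∀ a b j, e a j ≠ e b j → ∃ i ≤ j, t i ≤ dist a b) {s : Set Y} {a : Y} {k : ℕ}
    (hs : ∀ b ∈ s, ∀ i < k, dist a b < t i) :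
    e '' s ⊆ Set.pi (Finset.range k : Set ℕ) fun j => {e a j} := by
  rintro _ ⟨b, hb, rfl⟩ j hj
  by_contra hne
  obtain ⟨i, hij, hi⟩ := hsep a b j (Ne.symm hne)
  exact (hs b hb i (hij.trans_lt (Finset.mem_range.1 hj))).not_ge hi

variable [∀ k, Fintype (X k)]

theorem hausdorffMeasure_univ_eq_zero_of_dist_le [MeasurableSpace Y] [BorelSpace Y]
    (e : Y ≃ ∀ k, X k) {r : ℕ → ℝ}
    (hr0 : ∀ k, 0 ≤ r k) (hr : Tendsto r atTop (𝓝 0))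
    (hdist : ∀ a b k, (∀ j < k, e a j = e b j) → dist a b ≤ r k) {β : ℝ} (hβ : 0 ≤ β)
    (hsum : Tendsto (fun k => (∏ j ∈ Finset.range k, (Fintype.card (X j) : ℝ)) * r k ^ β)
      atTop (𝓝 0)) :
    μH[β] (univ : Set Y) = 0 := by
  set t : ∀ k, (∀ i : Fin k, X i) → Set Y := fun k w => {b | ∀ i : Fin k, e b i = w i}
  have hdiam : ∀ k w, Metric.ediam (t k w) ≤ ENNReal.ofReal (r k) := fun k w =>
    Metric.ediam_le_of_forall_dist_le fun a ha b hb =>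
      hdist a b k fun j hj => (ha ⟨j, hj⟩).trans (hb ⟨j, hj⟩).symm
  have hcover : ∀ k, univ ⊆ ⋃ w, t k w := fun k b _ =>
    mem_iUnion.2 ⟨fun i => e b i, fun _ => rfl⟩
  have hcard : ∀ k, Fintype.card (∀ i : Fin k, X i) = ∏ j ∈ Finset.range k, Fintype.card (X j) :=
    fun k => by rw [Fintype.card_pi, Fin.prod_univ_eq_prod_range (fun j => Fintype.card (X j))]
  have hbound : ∀ k, ∑ w, Metric.ediam (t k w) ^ β ≤
      ENNReal.ofReal ((∏ j ∈ Finset.range k, (Fintype.card (X j) : ℝ)) * r k ^ β) := fun k =>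
    calc ∑ w, Metric.ediam (t k w) ^ β ≤ ∑ _w : ∀ i : Fin k, X i, ENNReal.ofReal (r k) ^ β :=
          Finset.sum_le_sum fun w _ => ENNReal.rpow_le_rpow (hdiam k w) hβ
      _ = _ := by
          rw [Finset.sum_const, nsmul_eq_mul, Finset.card_univ, hcard,
            ENNReal.ofReal_rpow_of_nonneg (hr0 k) hβ, ENNReal.ofReal_mul (by positivity)]
          push_cast
          rw [ENNReal.ofReal_prod_of_nonneg fun _ _ => Nat.cast_nonneg _]
          simp
  have hr' : Tendsto (fun k => ENNReal.ofReal (r k)) atTop (𝓝 0) := by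
    simpa using ENNReal.tendsto_ofReal hr
  have hsum' := ENNReal.tendsto_ofReal hsum
  rw [ENNReal.ofReal_zero] at hsum'
  refine le_antisymm ?_ bot_le
  calc μH[β] (univ : Set Y)
      ≤ liminf (fun k => ∑ w, Metric.ediam (t k w) ^ β) atTop :=
        Measure.hausdorffMeasure_le_liminf_sum β univ _ hr' t (.of_forall hdiam)
          (.of_forall hcover)
    _ ≤ 0 := (liminf_le_liminf (.of_forall hbound)).trans_eq hsum'.liminf_eq

variable [∀ k, MeasurableSpace (X k)] [∀ k, MeasurableSingletonClass (X k)]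
  [∀ k, Nonempty (X k)]

theorem infinitePi_uniformOn_pi_range_singleton (x : ∀ k, X k) (k : ℕ) :
    Measure.infinitePi (fun k => ProbabilityTheory.uniformOn (univ : Set (X k)))
        (Set.pi (Finset.range k : Set ℕ) fun j => {x j}) =
      (∏ j ∈ Finset.range k, (Fintype.card (X j) : ℝ≥0∞))⁻¹ := by
  rw [Measure.infinitePi_pi _ fun j _ => measurableSet_singleton _,
    ENNReal.prod_inv_distrib fun _ _ _ _ _ => Or.inr (ENNReal.natCast_ne_top _)]
  refine Finset.prod_congr rfl fun j _ => ?_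
  simp [ProbabilityTheory.uniformOn_univ]

theorem ofReal_mul_infinitePi_image_le (e : Y ≃ ∀ k, X k) {t : ℕ → ℝ}
    (hsep : ∀ a b j, e a j ≠ e b j → ∃ i ≤ j, t i ≤ dist a b) {β c : ℝ}
    (hmass : ∀ k, c ≤ (∏ j ∈ Finset.range k, (Fintype.card (X j) : ℝ)) * t k ^ β)
    {s : Set Y} {a : Y} {k : ℕ} (hs : ∀ b ∈ s, ∀ i < k, dist a b < t i) :
    ENNReal.ofReal c *
        Measure.infinitePi (fun k => ProbabilityTheory.uniformOn (univ : Set (X k))) (e '' s) ≤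
      ENNReal.ofReal (t k ^ β) := by
  have hW : 0 < ∏ j ∈ Finset.range k, (Fintype.card (X j) : ℝ) :=
    Finset.prod_pos fun j _ => Nat.cast_pos.2 Fintype.card_pos
  calc _ ≤ ENNReal.ofReal c * (∏ j ∈ Finset.range k, (Fintype.card (X j) : ℝ≥0∞))⁻¹ := by
        rw [← infinitePi_uniformOn_pi_range_singleton (e a) k]
        gcongr
        exact image_subset_pi_range_of_dist_lt e hsep hs
    _ = ENNReal.ofReal (c / ∏ j ∈ Finset.range k, (Fintype.card (X j) : ℝ)) := by
        rw [ENNReal.ofReal_div_of_pos hW, div_eq_mul_inv,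
          ENNReal.ofReal_prod_of_nonneg fun _ _ => Nat.cast_nonneg _]
        simp
    _ ≤ ENNReal.ofReal (t k ^ β) := ENNReal.ofReal_le_ofReal ((div_le_iff₀' hW).2 (hmass k))

theorem ofReal_mul_infinitePi_image_le_ediam_rpow (e : Y ≃ ∀ k, X k) {t : ℕ → ℝ}
    (ht_pos : ∀ k, 0 < t k) (ht : Tendsto t atTop (𝓝 0))
    (hsep : ∀ a b j, e a j ≠ e b j → ∃ i ≤ j, t i ≤ dist a b) {β c : ℝ} (hβ : 0 < β)
    (hmass : ∀ k, c ≤ (∏ j ∈ Finset.range k, (Fintype.card (X j) : ℝ)) * t k ^ β)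
    {s : Set Y} (hs : Metric.ediam s ≠ ⊤) :
    ENNReal.ofReal c *
        Measure.infinitePi (fun k => ProbabilityTheory.uniformOn (univ : Set (X k))) (e '' s) ≤
      Metric.ediam s ^ β := by
  rcases s.eq_empty_or_nonempty with rfl | ⟨a, ha⟩
  · simp
  have hdist : ∀ b ∈ s, dist a b ≤ Metric.diam s := fun b hb =>
    Metric.dist_le_diam_of_mem' hs ha hb
  rcases (Metric.diam_nonneg (s := s)).eq_or_lt with h0 | hpos
  · -- a set of diameter zero lies in cylinders of every depth
    have hlim : Tendsto (fun k => ENNReal.ofReal (t k ^ β)) atTop (𝓝 0) := by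
      simpa [Real.zero_rpow hβ.ne'] using ENNReal.tendsto_ofReal (ht.rpow_const (Or.inr hβ.le))
    refine (ge_of_tendsto' hlim fun k => ofReal_mul_infinitePi_image_le e hsep hmass (a := a)
      fun b hb i _ => ?_).trans bot_le
    exact (hdist b hb).trans_lt (h0 ▸ ht_pos i)
  · have hex : ∃ k, t k ≤ Metric.diam s := (ht.eventually (ge_mem_nhds hpos)).exists
    refine (ofReal_mul_infinitePi_image_le e hsep hmass (a := a) fun b hb i hi =>
      (hdist b hb).trans_lt (not_le.1 (Nat.find_min hex hi))).trans ?_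
    rw [← ENNReal.ofReal_toReal hs, ENNReal.ofReal_rpow_of_nonneg ENNReal.toReal_nonneg hβ.le]
    exact ENNReal.ofReal_le_ofReal (Real.rpow_le_rpow (ht_pos _).le (Nat.find_spec hex) hβ.le)

theorem hausdorffMeasure_univ_ne_zero_of_le_dist [MeasurableSpace Y] [BorelSpace Y]
    (e : Y ≃ ∀ k, X k) {t : ℕ → ℝ}
    (ht_pos : ∀ k, 0 < t k) (ht : Tendsto t atTop (𝓝 0))
    (hsep : ∀ a b j, e a j ≠ e b j → ∃ i ≤ j, t i ≤ dist a b) {β c : ℝ} (hβ : 0 < β)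
    (hc : 0 < c) (hmass : ∀ k, c ≤ (∏ j ∈ Finset.range k, (Fintype.card (X j) : ℝ)) * t k ^ β) :
    μH[β] (univ : Set Y) ≠ 0 := by
  set P := Measure.infinitePi fun k => ProbabilityTheory.uniformOn (univ : Set (X k))
  have hle : ENNReal.ofReal c • OuterMeasure.comap e P.toOuterMeasure ≤
      (μH[β] : Measure Y).toOuterMeasure := by
    rw [Measure.hausdorffMeasure, Measure.mkMetric_toOuterMeasure]
    refine OuterMeasure.le_mkMetric _ _ 1 one_pos fun s hs => ?_
    simpa using ofReal_mul_infinitePi_image_le_ediam_rpow e ht_pos ht hsep hβ hmass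
      (ne_top_of_le_ne_top ENNReal.one_ne_top hs)
  intro h0
  have := hle univ
  simp only [smul_apply, OuterMeasure.comap_apply, image_univ, e.range_eq_univ,
    Measure.coe_toOuterMeasure, measure_univ, smul_eq_mul, mul_one, h0] at this
  exact (ENNReal.ofReal_pos.2 hc).ne' (le_antisymm this bot_le)

end SequenceSpace

theorem tendsto_prod_range_atTop_of_two_le {f : ℕ → ℝ} (hf : ∀ k, 2 ≤ f k) :
    Tendsto (fun k => ∏ j ∈ Finset.range k, f j) atTop atTop := by
  refine tendsto_atTop_mono (fun k => ?_) (tendsto_pow_atTop_atTop_of_one_lt one_lt_two)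
  calc (2 : ℝ) ^ k = ∏ _j ∈ Finset.range k, (2 : ℝ) := by simp
    _ ≤ ∏ j ∈ Finset.range k, f j := Finset.prod_le_prod (fun _ _ => zero_le_two) fun j _ => hf j

theorem tendsto_rpow_mul_rpow_atTop_of_log_div {W δ : ℕ → ℝ} (hW : Tendsto W atTop atTop)
    (hδ : ∀ k, 0 < δ k)
    (hlog : Tendsto (fun k => Real.log (δ k) / Real.log (W k)) atTop (𝓝 0)) {γ : ℝ}
    (hγ : 0 < γ) (β : ℝ) :
    Tendsto (fun k => W k ^ γ * δ k ^ β) atTop atTop := by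
  have hfac : Tendsto (fun k => γ + β * (Real.log (δ k) / Real.log (W k))) atTop (𝓝 γ) := by
    simpa using (hlog.const_mul β).const_add γ
  refine (Real.tendsto_exp_atTop.comp
    ((Real.tendsto_log_atTop.comp hW).atTop_mul_pos hγ hfac)).congr' ?_
  filter_upwards [hW.eventually_gt_atTop 1] with k hk
  have hlogW : Real.log (W k) ≠ 0 := (Real.log_pos hk).ne'
  rw [Function.comp_apply, Function.comp_apply, Real.rpow_def_of_pos (by linarith),
    Real.rpow_def_of_pos (hδ k), ← Real.exp_add]
  congr 1
  field_simp

section TreeMetric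

variable {n : ℕ → ℕ} {d : ∀ k : ℕ, Fin (n (k + 1)) → Fin (n (k + 1)) → ℝ} {α : ℝ}

theorem rhoAlpha_of_ne (hn0 : n 0 = 1) {x y : ∀ k, Fin (n (k + 1))} (h : x ≠ y) :
    rhoAlpha n d α x y = d (firstDiff x y h) (x (firstDiff x y h)) (y (firstDiff x y h)) /
      (∏ j ∈ Finset.range (firstDiff x y h), (n (j + 1) : ℝ)) ^ (1 / α) := by
  simp [rhoAlpha, h, Finset.prod_range_succ', hn0]

theorem rhoAlpha_le_of_forall_lt_eq (hn0 : n 0 = 1) (hn : ∀ k, 1 ≤ n (k + 1))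
    (hd_le : ∀ k i j, d k i j ≤ 1) (hα : 0 < α) {x y : ∀ k, Fin (n (k + 1))} {k : ℕ}
    (h : ∀ j < k, x j = y j) :
    rhoAlpha n d α x y ≤ ((∏ j ∈ Finset.range k, (n (j + 1) : ℝ)) ^ (1 / α))⁻¹ := by
  have hn' : ∀ j, (1 : ℝ) ≤ n (j + 1) := fun j => by exact_mod_cast hn j
  have hpos : 0 < ∏ j ∈ Finset.range k, (n (j + 1) : ℝ) :=
    Finset.prod_pos fun j _ => zero_lt_one.trans_le (hn' j)
  by_cases hxy : x = y
  · simp only [rhoAlpha, hxy, dite_true]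
    positivity
  have hk : k ≤ firstDiff x y hxy :=
    not_lt.1 fun hlt => Nat.find_spec (Function.ne_iff.mp hxy) (h _ hlt)
  rw [rhoAlpha_of_ne hn0 hxy, div_eq_mul_inv]
  refine (mul_le_of_le_one_left (by positivity) (hd_le _ _ _)).trans ?_
  gcongr
  exact fun j _ _ => hn' j

theorem exists_le_rhoAlpha_of_ne (hn0 : n 0 = 1) {δ : ℕ → ℝ}
    (hδ_min : ∀ k i j, i ≠ j → δ (k + 1) ≤ d k i j) {x y : ∀ k, Fin (n (k + 1))} {j : ℕ}
    (h : x j ≠ y j) :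
    ∃ i ≤ j, δ (i + 1) / (∏ l ∈ Finset.range i, (n (l + 1) : ℝ)) ^ (1 / α) ≤
      rhoAlpha n d α x y := by
  have hxy : x ≠ y := fun hxy => h (congrFun hxy j)
  refine ⟨firstDiff x y hxy, Nat.find_min' _ h, ?_⟩
  rw [rhoAlpha_of_ne hn0 hxy]
  exact div_le_div_of_nonneg_right (hδ_min _ _ _ (Nat.find_spec (Function.ne_iff.mp hxy)))
    (by positivity)

theorem sum_Ico_log_eq_log_prod_range (hn : ∀ k, n (k + 1) ≠ 0) (k : ℕ) :
    ∑ i ∈ Finset.Ico 1 (k + 1), Real.log (n i) =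
      Real.log (∏ j ∈ Finset.range k, (n (j + 1) : ℝ)) := by
  rw [Real.log_prod fun j _ => Nat.cast_ne_zero.2 (hn j), Finset.sum_Ico_eq_sum_range,
    Nat.add_sub_cancel]
  simp only [add_comm 1]

variable {Y : Type*} [MetricSpace Y] [MeasurableSpace Y] [BorelSpace Y]

theorem hausdorffMeasure_univ_eq_zero_of_lt (hn0 : n 0 = 1) (hn : ∀ k, 2 ≤ n (k + 1))
    (hd_le : ∀ k i j, d k i j ≤ 1) (hα : 0 < α) (e : Y ≃ ∀ k, Fin (n (k + 1)))
    (hdist : ∀ a b : Y, dist a b = rhoAlpha n d α (e a) (e b)) {β : ℝ} (hβ : α < β) :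
    μH[β] (univ : Set Y) = 0 := by
  set W := fun k => ∏ j ∈ Finset.range k, (n (j + 1) : ℝ)
  have hW : Tendsto W atTop atTop := tendsto_prod_range_atTop_of_two_le fun k => by
    exact_mod_cast hn k
  have hW_pos : ∀ k, 0 < W k := fun k =>
    Finset.prod_pos fun j _ => Nat.cast_pos.2 (zero_lt_two.trans_le (hn j))
  -- cylinders of depth `k` have diameter at most `W k ^ (-1/α)`, and there are `W k` of them
  have hsum : ∀ k, W k * ((W k ^ (1 / α))⁻¹) ^ β = W k ^ (-(β / α - 1)) := fun k => by
    rw [← Real.rpow_neg (hW_pos k).le, ← Real.rpow_mul (hW_pos k).le, mul_comm,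
      ← Real.rpow_add_one (hW_pos k).ne']
    congr 1
    ring
  refine hausdorffMeasure_univ_eq_zero_of_dist_le e (fun k => by positivity) ?_
    (fun a b k h => (hdist a b).trans_le
      (rhoAlpha_le_of_forall_lt_eq hn0 (fun k => one_le_two.trans (hn k)) hd_le hα h))
    (hα.le.trans hβ.le) ?_
  · exact ((tendsto_rpow_neg_atTop (one_div_pos.2 hα)).comp hW).congr fun k =>
      Real.rpow_neg (hW_pos k).le _
  · simp only [Fintype.card_fin]
    exact ((tendsto_rpow_neg_atTop (by rw [sub_pos, one_lt_div hα]; exact hβ)).comp hW).congr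
      fun k => (hsum k).symm

theorem hausdorffMeasure_univ_ne_zero_of_lt (hn0 : n 0 = 1) (hn : ∀ k, 2 ≤ n (k + 1))
    {δ : ℕ → ℝ} (hδ_min : ∀ k i j, i ≠ j → δ (k + 1) ≤ d k i j)
    (hδ_pos : ∀ k, 0 < δ (k + 1)) (hδ_le : ∀ k, δ (k + 1) ≤ 1) (hα : 0 < α)
    (hlim : Tendsto (fun k => Real.log (1 / δ k) / ∑ i ∈ Finset.Ico 1 k, Real.log (n i))
      atTop (𝓝 0))
    (e : Y ≃ ∀ k, Fin (n (k + 1))) (hdist : ∀ a b : Y, dist a b = rhoAlpha n d α (e a) (e b))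
    {β : ℝ} (hβ0 : 0 < β) (hβ : β < α) :
    μH[β] (univ : Set Y) ≠ 0 := by
  have : ∀ k, Nonempty (Fin (n (k + 1))) := fun k => ⟨⟨0, zero_lt_two.trans_le (hn k)⟩⟩
  set W := fun k => ∏ j ∈ Finset.range k, (n (j + 1) : ℝ)
  have hW : Tendsto W atTop atTop := tendsto_prod_range_atTop_of_two_le fun k => by
    exact_mod_cast hn k
  have hW_pos : ∀ k, 0 < W k := fun k =>
    Finset.prod_pos fun j _ => Nat.cast_pos.2 (zero_lt_two.trans_le (hn j))
  have hWα_pos : ∀ k, 0 < W k ^ (1 / α) := fun k => Real.rpow_pos_of_pos (hW_pos k) _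
  -- `t k` bounds from below the distance of two points whose codes first differ at `k`
  set t := fun k => δ (k + 1) / W k ^ (1 / α)
  have ht_pos : ∀ k, 0 < t k := fun k => div_pos (hδ_pos k) (hWα_pos k)
  have ht : Tendsto t atTop (𝓝 0) :=
    squeeze_zero (fun k => (ht_pos k).le)
      (fun k => by
        rw [Function.comp_apply, Real.rpow_neg (hW_pos k).le, ← one_div]
        exact div_le_div_of_nonneg_right (hδ_le k) (hWα_pos k).le)
      ((tendsto_rpow_neg_atTop (one_div_pos.2 hα)).comp hW)
  have hlog : Tendsto (fun k => Real.log (δ (k + 1)) / Real.log (W k)) atTop (𝓝 0) := by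
    simpa [sum_Ico_log_eq_log_prod_range fun k => (zero_lt_two.trans_le (hn k)).ne', neg_div]
      using (hlim.comp (tendsto_add_atTop_nat 1)).neg
  have hgrow : Tendsto (fun k => W k * t k ^ β) atTop atTop := by
    refine (tendsto_rpow_mul_rpow_atTop_of_log_div hW hδ_pos hlog
      (sub_pos.2 ((div_lt_one hα).2 hβ)) β).congr fun k => ?_
    rw [Real.div_rpow (hδ_pos k).le (hWα_pos k).le, ← Real.rpow_mul (hW_pos k).le,
      Real.rpow_sub (hW_pos k), Real.rpow_one]
    field_simp
  obtain ⟨k₀, hk₀⟩ := (Nat.cofinite_eq_atTop ▸ hgrow).exists_forall_le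
  refine hausdorffMeasure_univ_ne_zero_of_le_dist e ht_pos ht (fun a b j h => ?_) hβ0
    (mul_pos (hW_pos k₀) (Real.rpow_pos_of_pos (ht_pos k₀) β))
    (by simpa only [Fintype.card_fin] using hk₀)
  obtain ⟨i, hij, hi⟩ := exists_le_rhoAlpha_of_ne hn0 hδ_min h
  exact ⟨i, hij, hi.trans_eq (hdist a b).symm⟩

end TreeMetric

theorem stmt4_general {Y : Type*} [MetricSpace Y]
    (n : ℕ → ℕ) (hn0 : n 0 = 1) (hn : ∀ k, 1 ≤ k → 2 ≤ n k)
    (d : ∀ k : ℕ, Fin (n (k + 1)) → Fin (n (k + 1)) → ℝ)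
    (hd_le : ∀ k i j, d k i j ≤ 1)
    (δ : ℕ → ℝ)
    (hδ_min : ∀ k i j, i ≠ j → δ (k + 1) ≤ d k i j)
    (α : ℝ) (hα : 0 < α)
    (hδ_big : ∀ k : ℕ, ((n (k + 1) : ℝ)) ^ (-(1 : ℝ) / α) < δ (k + 1))
    (hlim : Filter.Tendsto
      (fun k : ℕ => Real.log (1 / δ k) / ∑ i ∈ Finset.Ico 1 k, Real.log (n i))
      Filter.atTop (nhds 0))
    (e : Y ≃ (∀ k : ℕ, Fin (n (k + 1))))
    (hdist : ∀ a b : Y, dist a b = rhoAlpha n d α (e a) (e b)) :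
    dimH (Set.univ : Set Y) = ENNReal.ofReal α := by
  borelize Y
  have hn' : ∀ k, 2 ≤ n (k + 1) := fun k => hn (k + 1) k.succ_pos
  have hδ_pos : ∀ k, 0 < δ (k + 1) := fun k =>
    (Real.rpow_pos_of_pos (Nat.cast_pos.2 (zero_lt_two.trans_le (hn' k))) _).trans (hδ_big k)
  have hδ_le : ∀ k, δ (k + 1) ≤ 1 := fun k =>
    (hδ_min k ⟨0, zero_lt_two.trans_le (hn' k)⟩ ⟨1, one_lt_two.trans_le (hn' k)⟩ (by simp)).trans
      (hd_le k _ _)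
  exact dimH_eq_ofReal_of_hausdorffMeasure hα.le
    (fun β hβ => hausdorffMeasure_univ_eq_zero_of_lt hn0 hn' hd_le hα e hdist hβ)
    fun β hβ0 hβ =>
      hausdorffMeasure_univ_ne_zero_of_lt hn0 hn' hδ_min hδ_pos hδ_le hα hlim e hdist hβ0 hβ

/-- With the tree-of-metric-spaces construction, if `δ_k > n_k^{−1/α}` for
all `k` and `log(1/δ_k) / ∑_{i=1}^{k−1} log n_i → 0`, then the Hausdorff dimension of
`(∏_{k≥1}{1,…,n_k}, ρ_α)` equals `α`. -/
theorem stmt4 {Y : Type*} [MetricSpace Y] [MeasurableSpace Y] [BorelSpace Y]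
    (n : ℕ → ℕ) (hn0 : n 0 = 1) (hn : ∀ k, 1 ≤ k → 2 ≤ n k)
    (d : ∀ k : ℕ, Fin (n (k + 1)) → Fin (n (k + 1)) → ℝ)
    (hd_symm : ∀ k i j, d k i j = d k j i)
    (hd_self : ∀ k i, d k i i = 0)
    (hd_tri : ∀ k i j l, d k i l ≤ d k i j + d k j l)
    (hd_le : ∀ k i j, d k i j ≤ 1)
    (hd_diam : ∀ k, ∃ i j, d k i j = 1)
    (δ : ℕ → ℝ)
    (hδ_min : ∀ k i j, i ≠ j → δ (k + 1) ≤ d k i j)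
    (hδ_att : ∀ k, ∃ i j, i ≠ j ∧ d k i j = δ (k + 1))
    (α : ℝ) (hα : 0 < α)
    (hδ_big : ∀ k : ℕ, ((n (k + 1) : ℝ)) ^ (-(1 : ℝ) / α) < δ (k + 1))
    (hlim : Filter.Tendsto
      (fun k : ℕ => Real.log (1 / δ k) / ∑ i ∈ Finset.Ico 1 k, Real.log (n i))
      Filter.atTop (nhds 0))
    (e : Y ≃ (∀ k : ℕ, Fin (n (k + 1))))
    (hdist : ∀ a b : Y, dist a b = rhoAlpha n d α (e a) (e b)) :
    dimH (Set.univ : Set Y) = ENNReal.ofReal α :=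
  stmt4_general n hn0 hn d hd_le δ hδ_min α hα hδ_big hlim e hdist
end

section
/- Let (X,d) be a finite metric space, β > 0, T a finite rooted tree, and F : T → 2^X a fragmentation map such that every vertex u ∈ T is β-separated: for all x ∈ ∂F_{r(T)} \ ∂F_u, d(x, F_u) ≥ β·diam(F_u). Define, for a non-leaf u and distinct children x,y of u, d̄_u(x,y) = diam(∂F_x ∪ ∂F_y). Then d̄_u is a metric on the set of children of u, and for any p ∈ ∂F_v, q ∈ ∂F_w with v,w distinct children of u, d(p,q) ≤ d̄_u(v,w) ≤ (1 + 2/β)·d(p,q). -/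
open scoped Classical

/-- `u` is a weak ancestor of `v` (some iterate of the parent map sends `v` to `u`). -/
def anc {V : Type*} (parent : V → V) (u v : V) : Prop := ∃ n : ℕ, parent^[n] v = u

/-- The set of children of `u` in a rooted tree given by a parent map. -/
def childrenOf {V : Type*} (parent : V → V) (root u : V) : Set V :=
  {v | parent v = u ∧ v ≠ root}

/-- `u` is a leaf: it has no children. -/
def IsTreeLeaf {V : Type*} (parent : V → V) (root u : V) : Prop :=
  childrenOf parent root u = ∅

/-- The boundary `∂F_u` of a fragmentation map. -/
def bdry {V X : Type*} (parent : V → V) (root : V) (F : V → Set X) (u : V) : Set X :=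
  ⋃ ℓ ∈ {ℓ : V | IsTreeLeaf parent root ℓ ∧ anc parent u ℓ}, F ℓ

/-- The induced distance `d̄_u` on the children of a vertex:
`d̄_u(v,w) = diam(∂F_v ∪ ∂F_w)` for `v ≠ w`, and `0` on the diagonal. -/
noncomputable def childDist {V X : Type*} [MetricSpace X] (parent : V → V) (root : V)
    (F : V → Set X) (v w : V) : ℝ :=
  if v = w then 0 else Metric.diam (bdry parent root F v ∪ bdry parent root F w)

/-!
Two distinct children `v, w` of `u` are incomparable in the tree, so `∂F_v ⊆ F_v` and
`∂F_w ⊆ F_w` are disjoint; every vertex has a leaf below it, so both are nonempty. Hence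
`d̄_u(v, w) ≥ d(p, q) > 0`, and the triangle inequality for `d̄_u` is the one for diameters of
two sets overlapping in `∂F_z`. For the upper bound, `q ∉ ∂F_v`, so `β`-separation of `v` gives
`β · diam F_v ≤ d(q, F_v) ≤ d(p, q)`, and symmetrically for `w`; therefore
`diam (∂F_v ∪ ∂F_w) ≤ diam F_v + d(p, q) + diam F_w ≤ (1 + 2/β) · d(p, q)`.
-/

section Tree

variable {V : Type*} {parent : V → V} {root : V} {depth : V → ℕ}

theorem anc_refl (u : V) : anc parent u u := ⟨0, rfl⟩

theorem anc.of_parent {u v : V} (h : anc parent u (parent v)) : anc parent u v := by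
  obtain ⟨n, hn⟩ := h
  exact ⟨n + 1, by rwa [Function.iterate_succ_apply]⟩

theorem anc.parent_of_ne {u v : V} (h : anc parent u v) (hne : u ≠ v) :
    anc parent u (parent v) := by
  obtain ⟨_ | n, hn⟩ := h
  · exact absurd hn.symm hne
  · exact ⟨n, by rwa [Function.iterate_succ_apply] at hn⟩

theorem anc_root (hdepth : ∀ v, v ≠ root → depth v = depth (parent v) + 1) (v : V) :
    anc parent root v := by
  induction hd : depth v generalizing v with
  | zero =>
    obtain rfl | hv := eq_or_ne v root
    · exact anc_refl v
    · have := hdepth v hv; omega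
  | succ n ih =>
    obtain rfl | hv := eq_or_ne v root
    · exact anc_refl v
    · exact (ih (parent v) (by have := hdepth v hv; omega)).of_parent

theorem depth_parent_le (hparent_root : parent root = root)
    (hdepth : ∀ v, v ≠ root → depth v = depth (parent v) + 1) (v : V) :
    depth (parent v) ≤ depth v := by
  obtain rfl | hv := eq_or_ne v root
  · rw [hparent_root]
  · have := hdepth v hv; omega

theorem anc.depth_le (hparent_root : parent root = root)
    (hdepth : ∀ v, v ≠ root → depth v = depth (parent v) + 1) {u v : V}
    (h : anc parent u v) : depth u ≤ depth v := by
  obtain ⟨n, rfl⟩ := h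
  induction n generalizing v with
  | zero => rfl
  | succ n ih =>
    rw [Function.iterate_succ_apply]
    exact ih.trans (depth_parent_le hparent_root hdepth v)

theorem not_anc_of_mem_childrenOf (hparent_root : parent root = root)
    (hdepth : ∀ v, v ≠ root → depth v = depth (parent v) + 1) {u v w : V}
    (hv : v ∈ childrenOf parent root u) (hw : w ∈ childrenOf parent root u) (hne : v ≠ w) :
    ¬ anc parent v w := fun h => by
  have hvu := (hw.1 ▸ h.parent_of_ne hne).depth_le hparent_root hdepth
  have hdv := hdepth v hv.2
  rw [hv.1] at hdv
  omega

theorem exists_isTreeLeaf_anc [Finite V]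
    (hdepth : ∀ v, v ≠ root → depth v = depth (parent v) + 1) (v : V) :
    ∃ ℓ, IsTreeLeaf parent root ℓ ∧ anc parent v ℓ := by
  obtain ⟨ℓ, hvℓ, hmax⟩ :=
    Set.exists_max_image {w | anc parent v w} depth (Set.toFinite _) ⟨v, anc_refl v⟩
  refine ⟨ℓ, Set.eq_empty_of_forall_notMem fun c ⟨hc, hcr⟩ => ?_, hvℓ⟩
  have hcℓ := hmax c (anc.of_parent (hc ▸ hvℓ))
  have hdc := hdepth c hcr
  rw [hc] at hdc
  omega

end Tree

section Fragmentation

variable {V X : Type*} {parent : V → V} {root : V} {depth : V → ℕ} {F : V → Set X}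

theorem subset_of_anc (hparent_root : parent root = root)
    (hFmono : ∀ v, v ≠ root → F v ⊆ F (parent v)) {u v : V} (h : anc parent u v)
    (hu : u ≠ root) : F v ⊆ F u := by
  obtain ⟨n, rfl⟩ := h
  induction n generalizing v with
  | zero => exact subset_rfl
  | succ n ih =>
    rw [Function.iterate_succ_apply] at hu ⊢
    have hv : v ≠ root := by
      rintro rfl
      exact hu (by rw [hparent_root]; exact Function.iterate_fixed hparent_root n)
    exact (hFmono v hv).trans (ih hu)

theorem bdry_subset (hparent_root : parent root = root)
    (hFmono : ∀ v, v ≠ root → F v ⊆ F (parent v)) {u : V} (hu : u ≠ root) :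
    bdry parent root F u ⊆ F u :=
  Set.iUnion₂_subset fun _ hℓ => subset_of_anc hparent_root hFmono hℓ.2 hu

theorem bdry_subset_bdry_root (hdepth : ∀ v, v ≠ root → depth v = depth (parent v) + 1)
    (u : V) : bdry parent root F u ⊆ bdry parent root F root :=
  Set.biUnion_mono (fun ℓ hℓ => ⟨hℓ.1, anc_root hdepth ℓ⟩) fun _ _ => subset_rfl

theorem bdry_nonempty [Finite V] (hdepth : ∀ v, v ≠ root → depth v = depth (parent v) + 1)
    (hFleaf : ∀ v, IsTreeLeaf parent root v → ∃ x, F v = {x}) (u : V) :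
    (bdry parent root F u).Nonempty := by
  obtain ⟨ℓ, hℓ, huℓ⟩ := exists_isTreeLeaf_anc hdepth u
  obtain ⟨x, hx⟩ := hFleaf ℓ hℓ
  exact ⟨x, Set.mem_biUnion (x := ℓ) ⟨hℓ, huℓ⟩ (hx ▸ rfl)⟩

theorem disjoint_bdry_of_mem_childrenOf (hparent_root : parent root = root)
    (hdepth : ∀ v, v ≠ root → depth v = depth (parent v) + 1)
    (hFmono : ∀ v, v ≠ root → F v ⊆ F (parent v))
    (hFdisj : ∀ u v : V, ¬ anc parent u v → ¬ anc parent v u → Disjoint (F u) (F v))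
    {u v w : V} (hv : v ∈ childrenOf parent root u) (hw : w ∈ childrenOf parent root u)
    (hne : v ≠ w) : Disjoint (bdry parent root F v) (bdry parent root F w) :=
  (hFdisj v w (not_anc_of_mem_childrenOf hparent_root hdepth hv hw hne)
      (not_anc_of_mem_childrenOf hparent_root hdepth hw hv hne.symm)).mono
    (bdry_subset hparent_root hFmono hv.2) (bdry_subset hparent_root hFmono hw.2)

end Fragmentation

theorem Metric.diam_union_le_diam_union_add_diam_union {X : Type*} [PseudoMetricSpace X]
    {s t r : Set X} (hs : Bornology.IsBounded s) (ht : Bornology.IsBounded t)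
    (hr : Bornology.IsBounded r) (hr_ne : r.Nonempty) :
    Metric.diam (s ∪ t) ≤ Metric.diam (s ∪ r) + Metric.diam (r ∪ t) :=
  calc Metric.diam (s ∪ t) ≤ Metric.diam ((s ∪ r) ∪ (r ∪ t)) :=
        Metric.diam_mono (Set.union_subset_union Set.subset_union_left Set.subset_union_right)
          ((hs.union hr).union (hr.union ht))
    _ ≤ Metric.diam (s ∪ r) + Metric.diam (r ∪ t) :=
        Metric.diam_union' (hr_ne.mono (Set.subset_inter Set.subset_union_right
          Set.subset_union_left))

section ChildDist

variable {V X : Type*} [MetricSpace X] {parent : V → V} {root : V} {F : V → Set X}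

theorem childDist_self (v : V) : childDist parent root F v v = 0 := if_pos rfl

theorem childDist_of_ne {v w : V} (hne : v ≠ w) :
    childDist parent root F v w = Metric.diam (bdry parent root F v ∪ bdry parent root F w) :=
  if_neg hne

theorem childDist_comm (v w : V) : childDist parent root F v w = childDist parent root F w v := by
  obtain rfl | hne := eq_or_ne v w
  · rfl
  · rw [childDist_of_ne hne, childDist_of_ne hne.symm, Set.union_comm]

theorem childDist_nonneg (v w : V) : 0 ≤ childDist parent root F v w := by
  unfold childDist
  split_ifs
  exacts [le_rfl, Metric.diam_nonneg]

variable [Finite X]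

theorem dist_le_childDist {v w : V} (hne : v ≠ w) {p q : X} (hp : p ∈ bdry parent root F v)
    (hq : q ∈ bdry parent root F w) : dist p q ≤ childDist parent root F v w := by
  rw [childDist_of_ne hne]
  exact Metric.dist_le_diam_of_mem (Set.toFinite _).isBounded (Or.inl hp) (Or.inr hq)

theorem childDist_pos {v w : V} (hne : v ≠ w) (hv : (bdry parent root F v).Nonempty)
    (hw : (bdry parent root F w).Nonempty)
    (hdisj : Disjoint (bdry parent root F v) (bdry parent root F w)) :
    0 < childDist parent root F v w := by
  obtain ⟨p, hp⟩ := hv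
  obtain ⟨q, hq⟩ := hw
  exact (dist_pos.2 (hdisj.ne_of_mem hp hq)).trans_le (dist_le_childDist hne hp hq)

theorem childDist_triangle {v w z : V} (hz : (bdry parent root F z).Nonempty) :
    childDist parent root F v w ≤ childDist parent root F v z + childDist parent root F z w := by
  obtain rfl | hvw := eq_or_ne v w
  · rw [childDist_self]
    exact add_nonneg (childDist_nonneg _ _) (childDist_nonneg _ _)
  obtain rfl | hvz := eq_or_ne v z
  · rw [childDist_self, zero_add]
  obtain rfl | hzw := eq_or_ne z w
  · rw [childDist_self, add_zero]
  rw [childDist_of_ne hvw, childDist_of_ne hvz, childDist_of_ne hzw]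
  exact Metric.diam_union_le_diam_union_add_diam_union (Set.toFinite _).isBounded
    (Set.toFinite _).isBounded (Set.toFinite _).isBounded hz

theorem childDist_le_of_mul_diam_le {β : ℝ} (hβ : 0 < β) {v w : V} (hne : v ≠ w) {p q : X}
    (hp : p ∈ bdry parent root F v) (hq : q ∈ bdry parent root F w)
    (hv : bdry parent root F v ⊆ F v) (hw : bdry parent root F w ⊆ F w)
    (hsepv : β * Metric.diam (F v) ≤ dist p q) (hsepw : β * Metric.diam (F w) ≤ dist p q) :
    childDist parent root F v w ≤ (1 + 2 / β) * dist p q := by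
  have hdiam_le {s S : Set X} (hsS : s ⊆ S) (hS : β * Metric.diam S ≤ dist p q) :
      Metric.diam s ≤ dist p q / β :=
    (Metric.diam_mono hsS (Set.toFinite _).isBounded).trans ((le_div_iff₀' hβ).2 hS)
  rw [childDist_of_ne hne]
  calc Metric.diam (bdry parent root F v ∪ bdry parent root F w)
      ≤ Metric.diam (bdry parent root F v) + dist p q + Metric.diam (bdry parent root F w) :=
        Metric.diam_union hp hq
    _ ≤ dist p q / β + dist p q + dist p q / β := by
        gcongr
        exacts [hdiam_le hv hsepv, hdiam_le hw hsepw]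
    _ = (1 + 2 / β) * dist p q := by ring

end ChildDist

theorem stmt13_general {V X : Type*} [Fintype V] [Fintype X] [MetricSpace X]
    (root : V) (parent : V → V) (depth : V → ℕ)
    (hparent_root : parent root = root)
    (hdepth : ∀ v, v ≠ root → depth v = depth (parent v) + 1)
    (F : V → Set X) (β : ℝ) (hβ : 0 < β)
    (hFleaf : ∀ v, IsTreeLeaf parent root v → ∃ x, F v = {x})
    (hFmono : ∀ v, v ≠ root → F v ⊆ F (parent v))
    (hFdisj : ∀ u v : V, ¬ anc parent u v → ¬ anc parent v u → Disjoint (F u) (F v))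
    (hsep : ∀ u : V, ∀ x ∈ bdry parent root F root \ bdry parent root F u,
      β * Metric.diam (F u) ≤ Metric.infDist x (F u)) :
    ∀ u : V, ¬ IsTreeLeaf parent root u →
      (∀ v ∈ childrenOf parent root u, ∀ w ∈ childrenOf parent root u,
        childDist parent root F v w = childDist parent root F w v) ∧
      (∀ v ∈ childrenOf parent root u, childDist parent root F v v = 0) ∧
      (∀ v ∈ childrenOf parent root u, ∀ w ∈ childrenOf parent root u, v ≠ w →
        0 < childDist parent root F v w) ∧
      (∀ v ∈ childrenOf parent root u, ∀ w ∈ childrenOf parent root u,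
        ∀ z ∈ childrenOf parent root u,
          childDist parent root F v w ≤
            childDist parent root F v z + childDist parent root F z w) ∧
      (∀ v ∈ childrenOf parent root u, ∀ w ∈ childrenOf parent root u, v ≠ w →
        ∀ p ∈ bdry parent root F v, ∀ q ∈ bdry parent root F w,
          dist p q ≤ childDist parent root F v w ∧
          childDist parent root F v w ≤ (1 + 2 / β) * dist p q) := by
  intro u _
  have hdisj {v w} (hv : v ∈ childrenOf parent root u) (hw : w ∈ childrenOf parent root u)
      (hne : v ≠ w) := disjoint_bdry_of_mem_childrenOf hparent_root hdepth hFmono hFdisj hv hw hne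
  have hsep_child {v w} (hv : v ∈ childrenOf parent root u) (hw : w ∈ childrenOf parent root u)
      (hne : v ≠ w) {p q} (hp : p ∈ bdry parent root F v) (hq : q ∈ bdry parent root F w) :
      β * Metric.diam (F v) ≤ dist p q :=
    (hsep v q ⟨bdry_subset_bdry_root hdepth w hq, (hdisj hv hw hne).notMem_of_mem_right hq⟩).trans
      (dist_comm p q ▸ Metric.infDist_le_dist_of_mem (bdry_subset hparent_root hFmono hv.2 hp))
  refine ⟨fun v _ w _ => childDist_comm v w, fun v _ => childDist_self v,
    fun v hv w hw hne => childDist_pos hne (bdry_nonempty hdepth hFleaf v)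
      (bdry_nonempty hdepth hFleaf w) (hdisj hv hw hne),
    fun v _ w _ z _ => childDist_triangle (bdry_nonempty hdepth hFleaf z),
    fun v hv w hw hne p hp q hq => ⟨dist_le_childDist hne hp hq, ?_⟩⟩
  exact childDist_le_of_mul_diam_le hβ hne hp hq (bdry_subset hparent_root hFmono hv.2)
    (bdry_subset hparent_root hFmono hw.2) (hsep_child hv hw hne hp hq)
    (dist_comm p q ▸ hsep_child hw hv hne.symm hq hp)

/-- If `F` is a `β`-separated fragmentation map of a finite metric space,
then for every non-leaf `u` the function `d̄_u(v,w) = diam(∂F_v ∪ ∂F_w)` is a metric on the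
children of `u`, and for `p ∈ ∂F_v`, `q ∈ ∂F_w` with `v ≠ w` children of `u`,
`d(p,q) ≤ d̄_u(v,w) ≤ (1 + 2/β)·d(p,q)`. -/
theorem stmt13 {V X : Type*} [Fintype V] [DecidableEq V] [Fintype X] [MetricSpace X]
    (root : V) (parent : V → V) (depth : V → ℕ)
    (hparent_root : parent root = root)
    (hdepth_root : depth root = 0)
    (hdepth : ∀ v, v ≠ root → depth v = depth (parent v) + 1)
    (F : V → Set X) (β : ℝ) (hβ : 0 < β)
    (hFroot : F root = Set.univ)
    (hFleaf : ∀ v, IsTreeLeaf parent root v → ∃ x, F v = {x})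
    (hFmono : ∀ v, v ≠ root → F v ⊆ F (parent v))
    (hFdisj : ∀ u v : V, ¬ anc parent u v → ¬ anc parent v u → Disjoint (F u) (F v))
    (hsep : ∀ u : V, ∀ x ∈ bdry parent root F root \ bdry parent root F u,
      β * Metric.diam (F u) ≤ Metric.infDist x (F u)) :
    ∀ u : V, ¬ IsTreeLeaf parent root u →
      (∀ v ∈ childrenOf parent root u, ∀ w ∈ childrenOf parent root u,
        childDist parent root F v w = childDist parent root F w v) ∧
      (∀ v ∈ childrenOf parent root u, childDist parent root F v v = 0) ∧
      (∀ v ∈ childrenOf parent root u, ∀ w ∈ childrenOf parent root u, v ≠ w →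
        0 < childDist parent root F v w) ∧
      (∀ v ∈ childrenOf parent root u, ∀ w ∈ childrenOf parent root u,
        ∀ z ∈ childrenOf parent root u,
          childDist parent root F v w ≤
            childDist parent root F v z + childDist parent root F z w) ∧
      (∀ v ∈ childrenOf parent root u, ∀ w ∈ childrenOf parent root u, v ≠ w →
        ∀ p ∈ bdry parent root F v, ∀ q ∈ bdry parent root F w,
          dist p q ≤ childDist parent root F v w ∧
          childDist parent root F v w ≤ (1 + 2 / β) * dist p q) :=
  stmt13_general root parent depth hparent_root hdepth F β hβ hFleaf hFmono hFdisj hsep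
end
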